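/- arXiv:2301.07380 — 3 statements merged into one kernel-verified Lean document; each statement's English description precedes it below -/
import Mathlib

section
/- Let P : ℝ → [0,∞) be measurable, 1-periodic, with ∫₀¹ P(γ) dγ = 1 and P·log P integrable on [0,1]. Fix N ∈ ℕ and define the discrete conditional probabilities p(m|φ) = P(φ − m/(N+1))/(N+1) for m ∈ {0,1,…,N} and φ ∈ [0,1). Then: (i) the marginal of m under the uniform prior on φ is uniform, i.e. ∫₀¹ p(m|φ) dφ = 1/(N+1) for every m; (ii) the conditional entropy satisfies −Σ_{m=0}^{N} ∫₀¹ p(m|φ)·log p(m|φ) dφ = log(N+1) − ∫₀¹ P(γ)·log P(γ) dγ; and hence (iii) the mutual information I = H(m) − H(m|φ) = log(N+1) + Σ_{m=0}^{N} ∫₀¹ p(m|φ)·log p(m|φ) dφ equals ∫₀¹ P(γ)·log P(γ) dγ, independently of N. -/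
open MeasureTheory Real

/-- Shift invariance of the integral over one period of a 1-periodic function. -/
lemma shift_integral_periodic (f : ℝ → ℝ) (hf : Function.Periodic f 1) (c : ℝ) :
    ∫ φ in (0 : ℝ)..1, f (φ - c) = ∫ γ in (0 : ℝ)..1, f γ := by
  rw [intervalIntegral.integral_comp_sub_right]
  have h := hf.intervalIntegral_add_eq (-c) 0
  rw [show (0:ℝ) - c = -c by ring, show (1:ℝ) - c = -c + 1 by ring]
  simpa using h

/-- Second Proposition of Appendix A of the paper: invariance of the mutual
information under discretization of the estimator.  Given a measurable,
nonnegative, `1`-periodic probability density `P` with integrable `P·log P`,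
and the discrete conditional probabilities `p m φ = P (φ - m/(N+1)) / (N+1)`:
(i) the marginal of `m` under the uniform prior on `φ` is uniform;
(ii) the conditional entropy equals `log (N+1) - ∫ P log P`;
(iii) the mutual information `log (N+1) + Σ_m ∫ p log p` equals
`∫ P log P`, independently of `N`. -/
theorem mutual_information_discretization_invariant (N : ℕ) (P : ℝ → ℝ)
    (hmeas : Measurable P) (hnonneg : ∀ x, 0 ≤ P x)
    (hper : Function.Periodic P 1)
    (hnorm : ∫ γ in (0 : ℝ)..1, P γ = 1)
    (hint : IntervalIntegrable (fun γ => P γ * Real.log (P γ)) volume 0 1)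
    (p : ℕ → ℝ → ℝ)
    (hp : ∀ m φ, p m φ = P (φ - (m : ℝ) / ((N : ℝ) + 1)) / ((N : ℝ) + 1)) :
    (∀ m ∈ Finset.range (N + 1),
        ∫ φ in (0 : ℝ)..1, p m φ = 1 / ((N : ℝ) + 1)) ∧
    (-∑ m ∈ Finset.range (N + 1),
        ∫ φ in (0 : ℝ)..1, p m φ * Real.log (p m φ) =
      Real.log ((N : ℝ) + 1) - ∫ γ in (0 : ℝ)..1, P γ * Real.log (P γ)) ∧
    (Real.log ((N : ℝ) + 1) + ∑ m ∈ Finset.range (N + 1),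
        ∫ φ in (0 : ℝ)..1, p m φ * Real.log (p m φ) =
      ∫ γ in (0 : ℝ)..1, P γ * Real.log (P γ)) := by
  set n1 : ℝ := (N : ℝ) + 1 with hn1
  have hn1pos : (0 : ℝ) < n1 := by positivity
  -- P is interval integrable on [0,1]
  have hPint : IntervalIntegrable P volume 0 1 := by
    by_contra h
    rw [intervalIntegral.integral_undef h] at hnorm
    exact one_ne_zero hnorm.symm
  -- the auxiliary function g
  set g : ℝ → ℝ := fun y => P y * Real.log (P y) / n1 - P y * (Real.log n1 / n1) with hg
  have hgper : Function.Periodic g 1 := by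
    intro x; simp only [hg, hper x]
  have hgkey : ∀ m φ, p m φ * Real.log (p m φ) = g (φ - (m : ℝ) / n1) := by
    intro m φ
    set y := φ - (m : ℝ) / n1
    rw [hp m φ]
    rcases eq_or_lt_of_le (hnonneg y) with h0 | h0
    · simp [hg, ← h0]
      exact Or.inl (Or.inl h0.symm)
    · rw [Real.log_div (ne_of_gt h0) (ne_of_gt hn1pos)]
      simp only [hg]
      ring
  -- integral of g over a period
  have hgint : ∫ γ in (0 : ℝ)..1, g γ =
      (∫ γ in (0 : ℝ)..1, P γ * Real.log (P γ)) / n1 - Real.log n1 / n1 := by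
    rw [hg]
    rw [intervalIntegral.integral_sub ((hint.div_const n1))
      (hPint.mul_const _)]
    rw [intervalIntegral.integral_div, intervalIntegral.integral_mul_const, hnorm]
    ring
  -- each ∫ p log p
  have hplog : ∀ m : ℕ, ∫ φ in (0 : ℝ)..1, p m φ * Real.log (p m φ) =
      (∫ γ in (0 : ℝ)..1, P γ * Real.log (P γ)) / n1 - Real.log n1 / n1 := by
    intro m
    calc ∫ φ in (0 : ℝ)..1, p m φ * Real.log (p m φ)
        = ∫ φ in (0 : ℝ)..1, g (φ - (m : ℝ) / n1) := by
          apply intervalIntegral.integral_congr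
          intro φ _; exact hgkey m φ
      _ = ∫ γ in (0 : ℝ)..1, g γ := shift_integral_periodic g hgper _
      _ = _ := hgint
  have hsum : ∑ m ∈ Finset.range (N + 1),
      ∫ φ in (0 : ℝ)..1, p m φ * Real.log (p m φ) =
      (∫ γ in (0 : ℝ)..1, P γ * Real.log (P γ)) - Real.log n1 := by
    rw [Finset.sum_congr rfl (fun m _ => hplog m), Finset.sum_const, Finset.card_range]
    have : ((N + 1 : ℕ) : ℝ) = n1 := by push_cast [hn1]; ring
    rw [nsmul_eq_mul, this]
    field_simp
  refine ⟨?_, ?_, ?_⟩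
  · intro m _
    calc ∫ φ in (0 : ℝ)..1, p m φ
        = ∫ φ in (0 : ℝ)..1, P (φ - (m : ℝ) / n1) / n1 := by
          apply intervalIntegral.integral_congr
          intro φ _; exact hp m φ
      _ = (∫ φ in (0 : ℝ)..1, P (φ - (m : ℝ) / n1)) / n1 :=
          intervalIntegral.integral_div _ _
      _ = 1 / n1 := by rw [shift_integral_periodic P hper, hnorm]
  · rw [hsum]; ring
  · rw [hsum]; ring
end

section
/- For every fixed positive integer k, lim_{N→∞} [ log₂ binom(N+k, N) − k·log₂(N/k + 1) ] = k·log₂ k − log₂(k!). -/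
open Filter Real Finset

lemma ascFactorial_prod (n : ℕ) : ∀ k : ℕ, n.ascFactorial k = ∏ i ∈ Finset.range k, (n + i)
  | 0 => by simp
  | k + 1 => by
    rw [Nat.ascFactorial_succ, Finset.prod_range_succ, ascFactorial_prod n k, Nat.mul_comm]

lemma choose_mul_fact (N k : ℕ) :
    (N + k).choose N * k.factorial = ∏ i ∈ Finset.range k, (N + 1 + i) := by
  rw [← ascFactorial_prod, Nat.ascFactorial_eq_factorial_mul_choose,
    Nat.choose_symm_add]; simp [Nat.mul_comm]

/-- The asymptotic multiphase advantage (paper's `ΔI_k`): for fixed `k ≥ 1`,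
the gap between the joint digital Heisenberg bound `HB(k,N) = log₂ binom(N+k,N)`
and the bound `k·HB(1,N/k) = k·log₂(N/k + 1)` for `k` independent single-phase
estimations tends to `k log₂ k − log₂ k!` as `N → ∞`. -/
theorem multiphase_advantage (k : ℕ) (hk : 0 < k) :
    Filter.Tendsto
      (fun N : ℕ =>
        Real.logb 2 (((N + k).choose N : ℝ)) -
          (k : ℝ) * Real.logb 2 ((N : ℝ) / (k : ℝ) + 1))
      Filter.atTop
      (nhds ((k : ℝ) * Real.logb 2 (k : ℝ) - Real.logb 2 (k.factorial : ℝ))) := by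
  have hk0 : (0:ℝ) < k := by exact_mod_cast hk
  have key : ∀ N : ℕ,
      Real.logb 2 (((N + k).choose N : ℝ)) -
          (k : ℝ) * Real.logb 2 ((N : ℝ) / (k : ℝ) + 1)
        = (∑ i ∈ Finset.range k, Real.logb 2 (((N:ℝ) + 1 + i) / ((N:ℝ) + k)))
          + ((k : ℝ) * Real.logb 2 (k : ℝ) - Real.logb 2 (k.factorial : ℝ)) := by
    intro N
    have hNk : (0:ℝ) < (N:ℝ) + k := by positivity
    have h1 : ((N:ℝ) / (k:ℝ) + 1) = ((N:ℝ) + k) / k := by field_simp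
    have hchoose : (((N + k).choose N : ℝ)) =
        (∏ i ∈ Finset.range k, ((N:ℝ) + 1 + i)) / (k.factorial : ℝ) := by
      have := choose_mul_fact N k
      have h2 : (((N + k).choose N : ℝ)) * (k.factorial : ℝ)
          = ∏ i ∈ Finset.range k, ((N:ℝ) + 1 + i) := by
        exact_mod_cast congrArg (Nat.cast : ℕ → ℝ) this
      field_simp [← h2]
      exact h2
    rw [hchoose, h1]
    have hfac : (0:ℝ) < (k.factorial : ℝ) := by positivity
    rw [Real.logb_div (by positivity) (ne_of_gt hfac),
      Real.logb_prod _ _ (fun i _ => by positivity),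
      Real.logb_div (ne_of_gt hNk) (ne_of_gt hk0)]
    have : ∀ i ∈ Finset.range k,
        Real.logb 2 (((N:ℝ) + 1 + i) / ((N:ℝ) + k))
          = Real.logb 2 ((N:ℝ) + 1 + i) - Real.logb 2 ((N:ℝ) + k) := by
      intro i _
      rw [Real.logb_div (by positivity) (ne_of_gt hNk)]
    rw [Finset.sum_congr rfl this, Finset.sum_sub_distrib, Finset.sum_const,
      Finset.card_range, nsmul_eq_mul]
    ring
  simp only [key]
  have hsum : Filter.Tendsto
      (fun N : ℕ => ∑ i ∈ Finset.range k, Real.logb 2 (((N:ℝ) + 1 + i) / ((N:ℝ) + k)))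
      Filter.atTop (nhds 0) := by
    have : (0:ℝ) = ∑ i ∈ Finset.range k, (0:ℝ) := by simp
    rw [this]
    apply tendsto_finset_sum
    intro i _
    have hratio : Filter.Tendsto
        (fun N : ℕ => ((N:ℝ) + 1 + i) / ((N:ℝ) + k)) Filter.atTop (nhds 1) := by
      have hden : Filter.Tendsto (fun N : ℕ => (N:ℝ) + k) Filter.atTop Filter.atTop :=
        tendsto_atTop_add_const_right _ _ tendsto_natCast_atTop_atTop
      have h0 : Filter.Tendsto
          (fun N : ℕ => ((1:ℝ) + i - k) / ((N:ℝ) + k)) Filter.atTop (nhds 0) :=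
        Filter.Tendsto.div_atTop tendsto_const_nhds hden
      have heq : ∀ᶠ N : ℕ in Filter.atTop,
          1 + ((1:ℝ) + i - k) / ((N:ℝ) + k) = ((N:ℝ) + 1 + i) / ((N:ℝ) + k) := by
        filter_upwards [Filter.eventually_atTop.mpr ⟨1, fun n hn => hn⟩] with N _
        have : (0:ℝ) < (N:ℝ) + k := by positivity
        field_simp
        ring
      have := (tendsto_const_nhds.add h0 :
        Filter.Tendsto (fun N : ℕ => 1 + ((1:ℝ) + i - k) / ((N:ℝ) + k))
          Filter.atTop (nhds (1 + 0)))
      rw [add_zero] at this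
      exact this.congr' heq
    have hcont : ContinuousAt (Real.logb 2) 1 :=
      Real.continuousAt_logb (by norm_num)
    have := hcont.tendsto.comp hratio
    simpa [Function.comp_def] using this
  have := hsum.add_const ((k : ℝ) * Real.logb 2 (k : ℝ) - Real.logb 2 (k.factorial : ℝ))
  simpa using this
end

section
/- For every N ∈ ℕ and every p ∈ [0,1], Σ_{n=0}^{N} √( binom(N,n) · p^{N−n} · (1−p)^{n} ) ≤ Σ_{n=0}^{N} √( binom(N,n) · 2^{−N} ), i.e. the overlap between the uniform superposition of the symmetric qubit basis states and the symmetric product state with amplitudes (√p, √(1−p)) (with trivial phases) is maximized at p = 1/2. -/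
open Real Finset

/-! Auxiliary development: we show that
`S N p = Σ √(binom(N,n) p^(N-n) (1-p)^n)` is symmetric about `p = 1/2` and
monotone on `[0, 1/2]`, hence maximized at `p = 1/2`. -/

noncomputable def bb (N n : ℕ) : ℝ := Real.sqrt (N.choose n)

lemma bb_nonneg (N n : ℕ) : 0 ≤ bb N n := Real.sqrt_nonneg _

lemma bb_pos {N n : ℕ} (h : n ≤ N) : 0 < bb N n :=
  Real.sqrt_pos.mpr (by exact_mod_cast Nat.choose_pos h)

lemma bb_zero {N n : ℕ} (h : N < n) : bb N n = 0 := by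
  simp [bb, Nat.choose_eq_zero_of_lt h]

lemma bb_symm {N n : ℕ} (h : n ≤ N) : bb N (N - n) = bb N n := by
  simp [bb, Nat.choose_symm h]

noncomputable def dd (N m : ℕ) : ℝ :=
  (if m = 0 then 0 else ((N : ℝ) - (m - 1 : ℕ)) * bb N (m - 1)) - ((m : ℝ) + 1) * bb N (m + 1)

lemma key_poly (M : ℕ) (d : ℕ → ℝ) (m₀ : ℕ)
    (hneg : ∀ m ∈ range M, m < m₀ → d m ≤ 0)
    (hpos : ∀ m ∈ range M, m₀ ≤ m → 0 ≤ d m)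
    (hsum : ∑ m ∈ range M, d m = 0) (τ : ℝ) (hτ : 1 ≤ τ) :
    0 ≤ ∑ m ∈ range M, d m * τ ^ m := by
  have h1 : ∀ m ∈ range M, d m * τ ^ m₀ ≤ d m * τ ^ m := by
    intro m hm
    rcases lt_or_ge m m₀ with h | h
    · exact mul_le_mul_of_nonpos_left (pow_le_pow_right₀ hτ h.le) (hneg m hm h)
    · exact mul_le_mul_of_nonneg_left (pow_le_pow_right₀ hτ h) (hpos m hm h)
  calc (0:ℝ) = (∑ m ∈ range M, d m) * τ ^ m₀ := by rw [hsum, zero_mul]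
    _ = ∑ m ∈ range M, d m * τ ^ m₀ := by rw [Finset.sum_mul]
    _ ≤ ∑ m ∈ range M, d m * τ ^ m := Finset.sum_le_sum h1

lemma cross₁ (N m : ℕ) (h : 2 * (m + 1) ≤ N) :
    (N - m) ^ 2 * N.choose m ≤ (m + 2) ^ 2 * N.choose (m + 2) := by
  obtain ⟨K, hK⟩ : ∃ K, N = m + 2 + K := ⟨N - (m + 2), by omega⟩
  subst hK
  have id1 := Nat.choose_succ_right_eq (m + 2 + K) m
  have id2 := Nat.choose_succ_right_eq (m + 2 + K) (m + 1)
  have e1 : m + 2 + K - m = K + 2 := by omega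
  have e2 : m + 2 + K - (m + 1) = K + 1 := by omega
  rw [e1] at id1 ⊢; rw [e2] at id2
  have e3 : m + 1 + 1 = m + 2 := by omega
  rw [e3] at id2
  have hmK : m ≤ K := by omega
  calc (K + 2) ^ 2 * (m+2+K).choose m
      = (K + 2) * ((m+2+K).choose m * (K + 2)) := by ring
    _ = (K + 2) * ((m+2+K).choose (m+1) * (m+1)) := by rw [id1]
    _ ≤ (m + 2) * ((m+2+K).choose (m+1) * (K+1)) := by
        nlinarith [Nat.zero_le ((m+2+K).choose (m+1))]
    _ = (m + 2) * ((m+2+K).choose (m+2) * (m+2)) := by rw [id2]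
    _ = (m + 2) ^ 2 * (m+2+K).choose (m+2) := by ring

lemma cross₂ (N m : ℕ) (h : N ≤ 2 * (m + 1)) (h2 : m + 2 ≤ N) :
    (m + 2) ^ 2 * N.choose (m + 2) ≤ (N - m) ^ 2 * N.choose m := by
  obtain ⟨K, hK⟩ : ∃ K, N = m + 2 + K := ⟨N - (m + 2), by omega⟩
  subst hK
  have id1 := Nat.choose_succ_right_eq (m + 2 + K) m
  have id2 := Nat.choose_succ_right_eq (m + 2 + K) (m + 1)
  have e1 : m + 2 + K - m = K + 2 := by omega
  have e2 : m + 2 + K - (m + 1) = K + 1 := by omega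
  rw [e1] at id1 ⊢; rw [e2] at id2
  have e3 : m + 1 + 1 = m + 2 := by omega
  rw [e3] at id2
  have hmK : K ≤ m := by omega
  calc (m + 2) ^ 2 * (m+2+K).choose (m+2)
      = (m + 2) * ((m+2+K).choose (m+2) * (m+2)) := by ring
    _ = (m + 2) * ((m+2+K).choose (m+1) * (K+1)) := by rw [id2]
    _ ≤ (K + 2) * ((m+2+K).choose (m+1) * (m+1)) := by
        nlinarith [Nat.zero_le ((m+2+K).choose (m+1))]
    _ = (K + 2) * ((m+2+K).choose m * (K+2)) := by rw [id1]
    _ = (K + 2) ^ 2 * (m+2+K).choose m := by ring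

lemma cast_mul_bb (c N n : ℕ) : (c : ℝ) * bb N n = Real.sqrt ((c ^ 2 * N.choose n : ℕ)) := by
  rw [bb]
  push_cast
  rw [Real.sqrt_mul (by positivity), Real.sqrt_sq (by positivity)]

lemma dd_nonpos {N m : ℕ} (h : 2 * m ≤ N) : dd N m ≤ 0 := by
  rcases m with _ | m'
  · simp only [dd, if_pos rfl, zero_sub, neg_nonpos]
    have := bb_nonneg N 1
    push_cast
    nlinarith
  · have hm' : m' ≤ N := by omega
    rw [dd, if_neg (by omega)]
    simp only [Nat.add_sub_cancel]
    rw [sub_nonpos, show ((N:ℝ) - (m' : ℕ)) = ((N - m' : ℕ) : ℝ) by rw [Nat.cast_sub hm'],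
      show ((m' + 1 : ℕ) : ℝ) + 1 = ((m' + 2 : ℕ) : ℝ) by push_cast; ring,
      show m' + 1 + 1 = m' + 2 by omega, cast_mul_bb, cast_mul_bb]
    apply Real.sqrt_le_sqrt
    exact_mod_cast cross₁ N m' (by omega)

lemma dd_nonneg {N m : ℕ} (h : N + 1 ≤ 2 * m) : 0 ≤ dd N m := by
  rcases m with _ | m'
  · omega
  · rw [dd, if_neg (by omega)]
    simp only [Nat.add_sub_cancel]
    rcases lt_or_ge N m' with hN | hm'
    · rw [bb_zero hN, bb_zero (by omega : N < m' + 1 + 1)]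
      simp
    · rw [sub_nonneg, show ((N:ℝ) - (m' : ℕ)) = ((N - m' : ℕ) : ℝ) by rw [Nat.cast_sub hm'],
        show ((m' + 1 : ℕ) : ℝ) + 1 = ((m' + 2 : ℕ) : ℝ) by push_cast; ring,
        show m' + 1 + 1 = m' + 2 by omega, cast_mul_bb, cast_mul_bb]
      apply Real.sqrt_le_sqrt
      rcases lt_or_ge N (m' + 2) with h2 | h2
      · rw [Nat.choose_eq_zero_of_lt h2]
        simp
        positivity
      · exact_mod_cast cross₂ N m' (by omega) h2

lemma gg_eq (N : ℕ) (τ : ℝ) :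
    ∑ m ∈ range (N + 2), dd N m * τ ^ m
      = ∑ n ∈ range (N + 1), ((N : ℝ) - n) * bb N n * τ ^ (n + 1)
        - ∑ n ∈ range (N + 1), (n : ℝ) * bb N n * τ ^ (n - 1) := by
  have split : ∀ m, dd N m * τ ^ m
      = (if m = 0 then 0 else ((N : ℝ) - (m - 1 : ℕ)) * bb N (m - 1) * τ ^ m)
        - ((m : ℝ) + 1) * bb N (m + 1) * τ ^ m := by
    intro m; rcases eq_or_ne m 0 with rfl | hm <;> simp [dd, sub_mul, *]
  simp only [split, Finset.sum_sub_distrib]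
  congr 1
  · rw [Finset.sum_range_succ' _ (N + 1)]
    simp
  · rw [Finset.sum_range_succ _ (N + 1), Finset.sum_range_succ _ N,
      bb_zero (by omega : N < N + 1), bb_zero (by omega : N < N + 1 + 1)]
    rw [Finset.sum_range_succ' (fun n => (n : ℝ) * bb N n * τ ^ (n - 1)) N]
    simp

lemma refl_sum (N : ℕ) :
    ∑ n ∈ range (N + 1), ((N : ℝ) - n) * bb N n = ∑ n ∈ range (N + 1), (n : ℝ) * bb N n := by
  conv_lhs => rw [← Finset.sum_range_reflect]
  apply Finset.sum_congr rfl
  intro j hj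
  have hjN : j ≤ N := by simpa using Nat.lt_succ_iff.mp (Finset.mem_range.mp hj)
  have e : N + 1 - 1 - j = N - j := by omega
  rw [e, bb_symm hjN, Nat.cast_sub hjN]
  ring

lemma dd_sum (N : ℕ) : ∑ m ∈ range (N + 2), dd N m = 0 := by
  have h := gg_eq N 1
  simp only [one_pow, mul_one] at h
  rw [h, refl_sum, sub_self]

lemma gg_nonneg (N : ℕ) (τ : ℝ) (hτ : 1 ≤ τ) :
    0 ≤ ∑ n ∈ range (N + 1), ((N : ℝ) - n) * bb N n * τ ^ (n + 1)
        - ∑ n ∈ range (N + 1), (n : ℝ) * bb N n * τ ^ (n - 1) := by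
  rw [← gg_eq]
  exact key_poly (N + 2) (dd N) (N / 2 + 1)
    (fun m _ hm => dd_nonpos (by omega))
    (fun m _ hm => dd_nonneg (by omega))
    (dd_sum N) τ hτ

lemma deriv_term_eq (k n : ℕ) (B ρ σ : ℝ) (hB : 0 < B) (hρ : 0 < ρ) (hσ : 0 < σ) :
    (B ^ 2 * ((k : ℝ) * (ρ ^ 2) ^ (k - 1)) * (σ ^ 2) ^ n
        + B ^ 2 * (ρ ^ 2) ^ k * ((n : ℝ) * (σ ^ 2) ^ (n - 1) * (-1)))
      / (2 * (B * ρ ^ k * σ ^ n))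
    = ((k : ℝ) * B * (σ / ρ) ^ (n + 1) - (n : ℝ) * B * (σ / ρ) ^ (n - 1)) * ρ ^ (n + k)
      / (2 * ρ * σ) := by
  rcases k with _ | k <;> rcases n with _ | n <;>
    · push_cast
      simp only [div_pow]
      field_simp
      try ring

lemma sqrt_pow_eq (x : ℝ) (hx : 0 ≤ x) (k : ℕ) : Real.sqrt (x ^ k) = Real.sqrt x ^ k := by
  rw [← Real.sqrt_sq (pow_nonneg (Real.sqrt_nonneg x) k), ← pow_mul, mul_comm, pow_mul,
    Real.sq_sqrt hx]

lemma sqrt_term_eq (N n : ℕ) (p : ℝ) (hp : 0 ≤ p) (hp1 : p ≤ 1) :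
    Real.sqrt ((N.choose n : ℝ) * p ^ (N - n) * (1 - p) ^ n)
      = bb N n * Real.sqrt p ^ (N - n) * Real.sqrt (1 - p) ^ n := by
  rw [Real.sqrt_mul (by positivity), Real.sqrt_mul (by positivity),
    sqrt_pow_eq p hp, sqrt_pow_eq (1 - p) (by linarith), bb]

lemma term_hasDeriv (N n : ℕ) (hn : n ≤ N) (p : ℝ) (hp : 0 < p) (hp1 : p < 1) :
    HasDerivAt (fun q : ℝ => Real.sqrt ((N.choose n : ℝ) * q ^ (N - n) * (1 - q) ^ n))
      ((((N : ℝ) - n) * bb N n * (Real.sqrt (1 - p) / Real.sqrt p) ^ (n + 1)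
          - (n : ℝ) * bb N n * (Real.sqrt (1 - p) / Real.sqrt p) ^ (n - 1)) * Real.sqrt p ^ N
        / (2 * Real.sqrt p * Real.sqrt (1 - p))) p := by
  have h1p : (0:ℝ) < 1 - p := by linarith
  set ρ := Real.sqrt p with hρdef
  set σ := Real.sqrt (1 - p) with hσdef
  have hρ : 0 < ρ := Real.sqrt_pos.mpr hp
  have hσ : 0 < σ := Real.sqrt_pos.mpr h1p
  have hpρ : p = ρ ^ 2 := (Real.sq_sqrt hp.le).symm
  have h1pσ : 1 - p = σ ^ 2 := (Real.sq_sqrt h1p.le).symm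
  have hB : 0 < bb N n := bb_pos hn
  have hCB : (N.choose n : ℝ) = bb N n ^ 2 := (Real.sq_sqrt (by positivity)).symm
  have hu : HasDerivAt (fun q : ℝ => (N.choose n : ℝ) * q ^ (N - n) * (1 - q) ^ n)
      (((N.choose n : ℝ) * (((N - n : ℕ) : ℝ) * p ^ (N - n - 1))) * (1 - p) ^ n
        + ((N.choose n : ℝ) * p ^ (N - n)) * ((n : ℝ) * (1 - p) ^ (n - 1) * (-1))) p :=
    ((hasDerivAt_pow (N - n) p).const_mul (N.choose n : ℝ)).mul
      (((hasDerivAt_id p).const_sub 1).pow n)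
  have hune : (N.choose n : ℝ) * p ^ (N - n) * (1 - p) ^ n ≠ 0 :=
    (mul_pos (mul_pos (by exact_mod_cast Nat.choose_pos hn) (pow_pos hp _)) (pow_pos h1p _)).ne'
  have hs := hu.sqrt hune
  have hkcast : ((N - n : ℕ) : ℝ) = (N : ℝ) - n := by
    rw [Nat.cast_sub hn]
  have hNnk : n + (N - n) = N := by omega
  convert hs using 1
  rw [sqrt_term_eq N n p hp.le hp1.le, ← hkcast,
    show Real.sqrt p ^ N = ρ ^ (n + (N - n)) by rw [hNnk]]
  have key := deriv_term_eq (N - n) n (bb N n) ρ σ hB hρ hσ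
  rw [← hpρ, ← h1pσ, ← hCB] at key
  exact key.symm

noncomputable def S (N : ℕ) : ℝ → ℝ := fun p =>
  ∑ n ∈ range (N + 1), Real.sqrt ((N.choose n : ℝ) * p ^ (N - n) * (1 - p) ^ n)

lemma S_hasDeriv (N : ℕ) (p : ℝ) (hp : 0 < p) (hp1 : p < 1) :
    HasDerivAt (S N)
      ((∑ n ∈ range (N + 1),
            ((N : ℝ) - n) * bb N n * (Real.sqrt (1 - p) / Real.sqrt p) ^ (n + 1)
          - ∑ n ∈ range (N + 1),
            (n : ℝ) * bb N n * (Real.sqrt (1 - p) / Real.sqrt p) ^ (n - 1))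
        * Real.sqrt p ^ N / (2 * Real.sqrt p * Real.sqrt (1 - p))) p := by
  have h := HasDerivAt.sum (u := range (N + 1))
    (A := fun n => fun q : ℝ => Real.sqrt ((N.choose n : ℝ) * q ^ (N - n) * (1 - q) ^ n))
    (A' := fun n =>
      (((N : ℝ) - n) * bb N n * (Real.sqrt (1 - p) / Real.sqrt p) ^ (n + 1)
          - (n : ℝ) * bb N n * (Real.sqrt (1 - p) / Real.sqrt p) ^ (n - 1)) * Real.sqrt p ^ N
        / (2 * Real.sqrt p * Real.sqrt (1 - p)))
    (fun n hn => term_hasDeriv N n (Nat.lt_succ_iff.mp (Finset.mem_range.mp hn)) p hp hp1)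
  refine HasDerivAt.congr_deriv (h.congr_of_eventuallyEq (Filter.Eventually.of_forall fun q => ?_)) ?_
  · simp [S, Finset.sum_apply]
  rw [← Finset.sum_div, ← Finset.sum_mul, Finset.sum_sub_distrib]

lemma S_continuous (N : ℕ) : Continuous (S N) := by
  apply continuous_finset_sum
  intro n _
  exact Real.continuous_sqrt.comp
    ((continuous_const.mul (continuous_pow (N - n))).mul
      ((continuous_const.sub continuous_id).pow n))

lemma S_symm (N : ℕ) (p : ℝ) : S N p = S N (1 - p) := by
  unfold S
  conv_lhs => rw [← Finset.sum_range_reflect]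
  apply Finset.sum_congr rfl
  intro j hj
  have hjN : j ≤ N := by simpa using Nat.lt_succ_iff.mp (Finset.mem_range.mp hj)
  have e : N + 1 - 1 - j = N - j := by omega
  rw [e, Nat.choose_symm hjN, Nat.sub_sub_self hjN, show (1 : ℝ) - (1 - p) = p by ring]
  rw [mul_assoc, mul_assoc, mul_comm (p ^ j)]

lemma S_monotone (N : ℕ) : MonotoneOn (S N) (Set.Icc 0 (1/2 : ℝ)) := by
  apply monotoneOn_of_deriv_nonneg (convex_Icc _ _) (S_continuous N).continuousOn
  · rw [interior_Icc]
    intro x hx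
    exact (S_hasDeriv N x hx.1 (by linarith [hx.2])).differentiableAt.differentiableWithinAt
  · rw [interior_Icc]
    intro x hx
    rw [(S_hasDeriv N x hx.1 (by linarith [hx.2])).deriv]
    have hρ : 0 < Real.sqrt x := Real.sqrt_pos.mpr hx.1
    have hσ : 0 < Real.sqrt (1 - x) := Real.sqrt_pos.mpr (by linarith [hx.2])
    have hτ : 1 ≤ Real.sqrt (1 - x) / Real.sqrt x := by
      rw [le_div_iff₀ hρ, one_mul]
      exact Real.sqrt_le_sqrt (by linarith [hx.2])
    apply div_nonneg
    · exact mul_nonneg (gg_nonneg N _ hτ) (pow_nonneg hρ.le N)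
    · positivity

lemma S_le_half (N : ℕ) (p : ℝ) (hp : p ∈ Set.Icc (0:ℝ) 1) : S N p ≤ S N (1/2) := by
  rcases le_or_gt p (1/2) with h | h
  · exact S_monotone N ⟨hp.1, h⟩ ⟨by norm_num, le_refl _⟩ h
  · rw [S_symm N p]
    exact S_monotone N ⟨by linarith [hp.2], by linarith⟩ ⟨by norm_num, le_refl _⟩ (by linarith)

/-- The overlap between the uniform superposition of the symmetric qubit basis
states and the symmetric product state with amplitudes `(√p, √(1−p))` is
maximized at `p = 1/2`: for every `N` and every `p ∈ [0,1]`,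
`Σ_{n=0}^{N} √(binom(N,n) p^{N−n} (1−p)^n) ≤ Σ_{n=0}^{N} √(binom(N,n) 2^{−N})`. -/
theorem overlap_maximized_at_half (N : ℕ) (p : ℝ) (hp : p ∈ Set.Icc (0 : ℝ) 1) :
    ∑ n ∈ Finset.range (N + 1),
        Real.sqrt ((N.choose n : ℝ) * p ^ (N - n) * (1 - p) ^ n) ≤
      ∑ n ∈ Finset.range (N + 1),
        Real.sqrt ((N.choose n : ℝ) * (1 / 2) ^ N) := by
  have hR : ∑ n ∈ Finset.range (N + 1), Real.sqrt ((N.choose n : ℝ) * (1 / 2) ^ N)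
      = S N (1/2) := by
    apply Finset.sum_congr rfl
    intro n hn
    have hnN : n ≤ N := Nat.lt_succ_iff.mp (Finset.mem_range.mp hn)
    congr 1
    rw [show (1:ℝ) - 1/2 = 1/2 by norm_num, mul_assoc, pow_sub_mul_pow (1/2 : ℝ) hnN]
  rw [hR]
  exact S_le_half N p hp
end
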